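/- Let Ω₁, …, Ωₙ be nonempty closed convex sets with empty intersection in a Hilbert space X, and let D(x) = max_i d(x, Ωᵢ). Then x̄ ∈ X minimizes D if and only if x̄ ∈ conv{Π(x̄; Ωᵢ) : i ∈ I(x̄)}, where I(x̄) = {i : D(x̄) = d(x̄, Ωᵢ)} and Π(x̄; Ωᵢ) denotes the (unique) metric projection of x̄ onto Ωᵢ. -/

import Mathlib

/-!
Both sides say that for every direction `v` some active projection `wᵢ` has `⟪v, wᵢ - x̄⟫ ≤ 0`.
For the convex hull of finitely many points this is separation by the nearest point of the hull.
For minimality: if instead `⟪v, wᵢ - x̄⟫ > 0` for all active `i`, a small step from `x̄` along `v`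
shortens every active distance `‖x̄ - wᵢ‖ = D(x̄)` and, by continuity, keeps the inactive ones
below `D(x̄)`. Conversely, `Ωᵢ` lies in the half-space `{u | ⟪x̄ - wᵢ, u - wᵢ⟫ ≤ 0}`, so every `x`
with `⟪x - x̄, wᵢ - x̄⟫ ≤ 0` has `d(x, Ωᵢ) ≥ ‖x̄ - wᵢ‖ = D(x̄)`.
-/

open Metric Set Filter Topology Finset
open scoped RealInnerProductSpace

section InnerProductSpace

variable {X : Type*} [NormedAddCommGroup X] [InnerProductSpace ℝ X]

theorem mem_convexHull_iff_forall_exists_inner_le {A : Set X} (hA : A.Finite) {x : X} :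
    x ∈ convexHull ℝ A ↔ ∀ v : X, ∃ a ∈ A, ⟪v, a⟫ ≤ ⟪v, x⟫ := by
  refine ⟨fun hx v ↦ ((innerₛₗ ℝ v).concaveOn convex_univ).exists_le_of_mem_convexHull
    (subset_univ A) hx, fun h ↦ ?_⟩
  by_contra hx
  obtain ⟨a₀, ha₀, -⟩ := h 0
  obtain ⟨p, hpC, hp⟩ := exists_norm_eq_iInf_of_complete_convex ⟨a₀, subset_convexHull ℝ A ha₀⟩
    (hA.isCompact_convexHull ℝ).isComplete (convex_convexHull ℝ A) x
  have hproj := (norm_eq_iInf_iff_real_inner_le_zero (convex_convexHull ℝ A) hpC).1 hp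
  obtain ⟨a, ha, hax⟩ := h (p - x)
  have hpx : 0 < ‖p - x‖ := norm_pos_iff.2 (sub_ne_zero.2 fun hpx ↦ hx (hpx ▸ hpC))
  have hsplit : ⟪p - x, a - x⟫ = ‖p - x‖ ^ 2 - ⟪x - p, a - p⟫ := by
    rw [← real_inner_self_eq_norm_sq, ← neg_sub p x, inner_neg_left, sub_neg_eq_add,
      ← inner_add_right, sub_add_sub_cancel']
  linarith [hproj a (subset_convexHull ℝ A ha), inner_sub_right (𝕜 := ℝ) (p - x) a x,
    sq_pos_of_pos hpx]

theorem inner_sub_le_zero_of_dist_eq_infDist {s : Set X} (hs : Convex ℝ s) {x w : X}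
    (hw : w ∈ s) (hd : dist x w = infDist x s) : ∀ u ∈ s, ⟪x - w, u - w⟫ ≤ 0 := by
  refine (norm_eq_iInf_iff_real_inner_le_zero hs hw).1 ?_
  simpa only [← dist_eq_norm, infDist_eq_iInf] using hd

theorem infDist_le_infDist_of_inner_le {s : Set X} (hs : Convex ℝ s) {x y w : X}
    (hw : w ∈ s) (hd : dist x w = infDist x s) (hy : ⟪y - x, w⟫ ≤ ⟪y - x, x⟫) :
    infDist x s ≤ infDist y s := by
  rw [← hd, le_infDist ⟨w, hw⟩]
  intro u hu
  have hwu := inner_sub_le_zero_of_dist_eq_infDist hs hw hd u hu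
  have hsplit : ⟪x - w, y - u⟫ = ⟪y - x, x - w⟫ + ‖x - w‖ ^ 2 - ⟪x - w, u - w⟫ := by
    rw [real_inner_comm (x - w) (y - x), ← real_inner_self_eq_norm_sq, ← inner_add_right,
      ← inner_sub_right]
    congr 1; abel
  have hcs := real_inner_le_norm (x - w) (y - u)
  rw [dist_eq_norm, dist_eq_norm]
  nlinarith [inner_sub_right (𝕜 := ℝ) (y - x) x w, norm_nonneg (x - w), norm_nonneg (y - u)]

theorem eventually_dist_add_smul_lt {x v w : X} (h : ⟪v, x⟫ < ⟪v, w⟫) :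
    ∀ᶠ t in 𝓝[>] (0 : ℝ), dist (x + t • v) w < dist x w := by
  have hsmall : ∀ᶠ t in 𝓝[>] (0 : ℝ), t * ‖v‖ ^ 2 < 2 * (⟪v, w⟫ - ⟪v, x⟫) :=
    nhdsWithin_le_nhds <| (continuous_id.mul continuous_const).continuousAt.eventually_lt
      continuousAt_const (by simpa using h)
  filter_upwards [hsmall, self_mem_nhdsWithin] with t hsmall (ht : 0 < t)
  rw [dist_eq_norm, dist_eq_norm, ← sq_lt_sq₀ (norm_nonneg _) (norm_nonneg _),
    show x + t • v - w = (x - w) + t • v by abel, norm_add_sq_real, inner_smul_right,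
    norm_smul, mul_pow, Real.norm_eq_abs, sq_abs, real_inner_comm, inner_sub_right]
  nlinarith

variable {ι : Type*} [Fintype ι]

noncomputable def maxInfDist (Ω : ι → Set X) (hι : (univ : Finset ι).Nonempty) (x : X) : ℝ :=
  univ.sup' hι fun i ↦ infDist x (Ω i)

variable {Ω : ι → Set X} {hι : (univ : Finset ι).Nonempty} {x₀ : X} {w : ι → X}

theorem isMinOn_maxInfDist_of_forall_exists_inner_le (hco : ∀ i, Convex ℝ (Ω i))
    (hw : ∀ i, w i ∈ Ω i ∧ dist x₀ (w i) = infDist x₀ (Ω i))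
    (h : ∀ v, ∃ i, maxInfDist Ω hι x₀ = infDist x₀ (Ω i) ∧ ⟪v, w i⟫ ≤ ⟪v, x₀⟫) :
    IsMinOn (maxInfDist Ω hι) univ x₀ := fun x _ ↦ by
  obtain ⟨i, hi, hx⟩ := h (x - x₀)
  calc maxInfDist Ω hι x₀ = infDist x₀ (Ω i) := hi
    _ ≤ infDist x (Ω i) := infDist_le_infDist_of_inner_le (hco i) (hw i).1 (hw i).2 hx
    _ ≤ maxInfDist Ω hι x := le_sup' (fun i ↦ infDist x (Ω i)) (mem_univ i)

theorem exists_inner_le_of_isMinOn_maxInfDist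
    (hw : ∀ i, w i ∈ Ω i ∧ dist x₀ (w i) = infDist x₀ (Ω i))
    (hmin : IsMinOn (maxInfDist Ω hι) univ x₀) (v : X) :
    ∃ i, maxInfDist Ω hι x₀ = infDist x₀ (Ω i) ∧ ⟪v, w i⟫ ≤ ⟪v, x₀⟫ := by
  by_contra! hv
  have hdesc : ∀ᶠ t in 𝓝[>] (0 : ℝ), ∀ i, infDist (x₀ + t • v) (Ω i) < maxInfDist Ω hι x₀ := by
    refine eventually_all.2 fun i ↦ ?_
    by_cases hi : maxInfDist Ω hι x₀ = infDist x₀ (Ω i)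
    · filter_upwards [eventually_dist_add_smul_lt (hv i hi)] with t ht
      calc infDist (x₀ + t • v) (Ω i)
          ≤ dist (x₀ + t • v) (w i) := infDist_le_dist_of_mem (hw i).1
        _ < dist x₀ (w i) := ht
        _ = maxInfDist Ω hι x₀ := by rw [(hw i).2, hi]
    · have hlt : infDist x₀ (Ω i) < maxInfDist Ω hι x₀ :=
        (le_sup' (fun i ↦ infDist x₀ (Ω i)) (mem_univ i)).lt_of_ne (Ne.symm hi)
      refine nhdsWithin_le_nhds <| ContinuousAt.eventually_lt ?_ continuousAt_const
        (by simpa using hlt)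
      fun_prop
  obtain ⟨t, ht⟩ := hdesc.exists
  exact (isMinOn_univ_iff.1 hmin _).not_gt ((sup'_lt_iff hι).2 fun i _ ↦ ht i)

end InnerProductSpace

/-- Characterization of solutions to the smallest intersecting ball problem in a
Hilbert space: `xbar` minimizes `D` iff it lies in the convex hull of its projections
onto the active sets.  Here `w i` denotes the (unique) projection of `xbar` onto `Ω i`. -/
theorem isMinOn_iff_mem_convexHull_proj
    {X : Type*} [NormedAddCommGroup X] [InnerProductSpace ℝ X]
    (n : ℕ) (hn : 1 < n) (Ω : Fin n → Set X)
    (hco : ∀ i, Convex ℝ (Ω i))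
    (D : X → ℝ)
    (hD : D = fun x => Finset.univ.sup' (Finset.univ_nonempty_iff.2 ⟨⟨0, by omega⟩⟩)
      fun i => Metric.infDist x (Ω i))
    (xbar : X) (w : Fin n → X)
    (hw : ∀ i, w i ∈ Ω i ∧ dist xbar (w i) = Metric.infDist xbar (Ω i)) :
    IsMinOn D Set.univ xbar ↔
      xbar ∈ convexHull ℝ (w '' {i | D xbar = Metric.infDist xbar (Ω i)}) := by
  subst hD
  rw [mem_convexHull_iff_forall_exists_inner_le ((toFinite _).image w)]
  simp only [exists_mem_image, mem_ofPred_eq]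
  exact ⟨exists_inner_le_of_isMinOn_maxInfDist hw,
    isMinOn_maxInfDist_of_forall_exists_inner_le hco hw⟩
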